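/- arXiv:2302.04458 — 5 statements merged into one kernel-verified Lean document; each statement's English description precedes it below -/
import Mathlib

section
/- Let (A,B) be a Pythagorean pair on 𝔥 and ξ ∈ 𝔥. Then ‖φ(w)ξ‖ tends to 0 along the Fréchet filter of the free monoid (i.e. for every ε>0, all but finitely many words w satisfy ‖φ(w)ξ‖ < ε) if and only if lim_{n→∞} ‖p_n ξ‖ = 0 for every ray p. -/
open Filter Topology

noncomputable def pythWord {H : Type*} [NormedAddCommGroup H] [InnerProductSpace ℂ H]
    (A B : H →L[ℂ] H) (w : List Bool) : H →L[ℂ] H :=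
  (w.map (fun x => if x then B else A)).prod

/-- The operator `p_n` given by composing the operators of the first `n` letters of the
ray `p` (first letter applied first). `false` stands for `a ↦ A`, `true` for `b ↦ B`. -/
noncomputable def rayOp {H : Type*} [NormedAddCommGroup H] [InnerProductSpace ℂ H]
    (A B : H →L[ℂ] H) (p : ℕ → Bool) (n : ℕ) : H →L[ℂ] H :=
  pythWord A B ((List.range n).reverse.map p)

/-!
Since `A*A + B*B = 1`, both `A` and `B` are contractions, so `‖φ(v w) ξ‖ ≤ ‖φ(w) ξ‖`: the norm can
only drop as letters are applied. In particular `n ↦ ‖p_n ξ‖` is antitone along every ray. If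
`{w | ε ≤ ‖φ(w) ξ‖}` is infinite, it contains arbitrarily long words, so the sets
`K n = {p | ε ≤ ‖p_n ξ‖}` form a decreasing sequence of nonempty closed subsets of the compact
space `ℕ → Bool`; a ray in their intersection keeps `‖p_n ξ‖ ≥ ε`. Conversely, distinct `n` give
distinct prefixes `p_n`, so the Fréchet condition restricts to every ray.
-/

theorem tendsto_norm_cofinite_nhds_zero_iff {α E : Type*} [SeminormedAddCommGroup E]
    {f : α → E} :
    Tendsto (fun x => ‖f x‖) cofinite (𝓝 0) ↔ ∀ ε : ℝ, 0 < ε → {x | ε ≤ ‖f x‖}.Finite := by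
  simp only [Metric.tendsto_nhds, Real.dist_0_eq_abs, abs_norm, eventually_cofinite, not_lt]

theorem isClosed_of_forall_eq_lt {X : Type*} [TopologicalSpace X] [DiscreteTopology X]
    {s : Set (ℕ → X)} (n : ℕ) (hs : ∀ p q : ℕ → X, (∀ i < n, p i = q i) → p ∈ s → q ∈ s) :
    IsClosed s := by
  let r : (ℕ → X) → (Fin n → X) := fun p i => p i
  have hr : Continuous r := continuous_pi fun i => continuous_apply _
  convert (isClosed_discrete (r '' s)).preimage hr
  refine (Set.subset_preimage_image r s).antisymm ?_
  rintro q ⟨p, hp, hpq⟩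
  exact hs p q (fun i hi => congrFun hpq ⟨i, hi⟩) hp

theorem injective_map_reverse_range {α : Type*} (p : ℕ → α) :
    Function.Injective fun n => (List.range n).reverse.map p := by
  intro m n h
  simpa using congrArg List.length h

theorem map_reverse_range_getD_reverse {α : Type*} (w : List α) (d : α) :
    (List.range w.length).reverse.map (fun i => w.reverse.getD i d) = w := by
  rw [List.map_reverse]
  apply List.reverse_injective
  rw [List.reverse_reverse]
  apply List.ext_getElem (by simp)
  intro n _ h
  rw [List.getElem_map, List.getElem_range, List.getD_eq_getElem _ _ h]

section Words

variable {H : Type*} [NormedAddCommGroup H] [InnerProductSpace ℂ H] {A B : H →L[ℂ] H}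

theorem norm_sq_add_norm_sq_of_adjoint_comp_add [CompleteSpace H]
    (hpyth : (ContinuousLinearMap.adjoint A).comp A
      + (ContinuousLinearMap.adjoint B).comp B = 1) (η : H) :
    ‖A η‖ ^ 2 + ‖B η‖ ^ 2 = ‖η‖ ^ 2 := by
  have h := congrArg (fun T : H →L[ℂ] H => (inner ℂ (T η) η : ℂ)) hpyth
  simp only [add_apply, ContinuousLinearMap.comp_apply, one_apply_eq_self, inner_add_left,
    ContinuousLinearMap.adjoint_inner_left, inner_self_eq_norm_sq_to_K] at h
  exact_mod_cast h

theorem opNorm_le_one_of_adjoint_comp_add [CompleteSpace H]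
    (hpyth : (ContinuousLinearMap.adjoint A).comp A
      + (ContinuousLinearMap.adjoint B).comp B = 1) :
    ‖A‖ ≤ 1 ∧ ‖B‖ ≤ 1 := by
  have hsq := norm_sq_add_norm_sq_of_adjoint_comp_add hpyth
  have of_sq_le (T : H →L[ℂ] H) (hT : ∀ η, ‖T η‖ ^ 2 ≤ ‖η‖ ^ 2) : ‖T‖ ≤ 1 :=
    T.opNorm_le_bound zero_le_one fun η => by
      rw [one_mul]
      exact (pow_le_pow_iff_left₀ (norm_nonneg _) (norm_nonneg _) two_ne_zero).mp (hT η)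
  exact ⟨of_sq_le A fun η => by nlinarith [hsq η, sq_nonneg ‖B η‖],
    of_sq_le B fun η => by nlinarith [hsq η, sq_nonneg ‖A η‖]⟩

theorem norm_pythWord_le_one (hA : ‖A‖ ≤ 1) (hB : ‖B‖ ≤ 1) (w : List Bool) :
    ‖pythWord A B w‖ ≤ 1 := by
  induction w with
  | nil => exact ContinuousLinearMap.norm_id_le
  | cons x w ih =>
    calc ‖pythWord A B (x :: w)‖ ≤ ‖if x then B else A‖ * ‖pythWord A B w‖ := by
          simp only [pythWord, List.map_cons, List.prod_cons]; exact norm_mul_le _ _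
      _ ≤ 1 := mul_le_one₀ (by cases x <;> assumption) (norm_nonneg _) ih

theorem norm_pythWord_append_apply_le (hA : ‖A‖ ≤ 1) (hB : ‖B‖ ≤ 1) (v w : List Bool) (ξ : H) :
    ‖pythWord A B (v ++ w) ξ‖ ≤ ‖pythWord A B w ξ‖ := by
  rw [pythWord, List.map_append, List.prod_append, mul_apply_eq_comp]
  exact ((pythWord A B v).le_of_opNorm_le (norm_pythWord_le_one hA hB v) _).trans_eq (one_mul _)

theorem rayOp_succ (p : ℕ → Bool) (n : ℕ) :
    rayOp A B p (n + 1) = pythWord A B ([p n] ++ (List.range n).reverse.map p) := by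
  simp [rayOp, List.range_succ]

theorem antitone_norm_rayOp_apply (hA : ‖A‖ ≤ 1) (hB : ‖B‖ ≤ 1) (p : ℕ → Bool) (ξ : H) :
    Antitone fun n => ‖rayOp A B p n ξ‖ :=
  antitone_nat_of_succ_le fun n => by
    rw [rayOp_succ]; exact norm_pythWord_append_apply_le hA hB _ _ ξ

theorem rayOp_congr {p q : ℕ → Bool} {n : ℕ} (h : ∀ i < n, p i = q i) :
    rayOp A B p n = rayOp A B q n := by
  unfold rayOp
  congr 1
  exact List.map_congr_left fun i hi => h i (by simpa using hi)

theorem exists_ray_forall_le_norm_rayOp_apply (hA : ‖A‖ ≤ 1) (hB : ‖B‖ ≤ 1) {ξ : H} {ε : ℝ}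
    (hinf : {w : List Bool | ε ≤ ‖pythWord A B w ξ‖}.Infinite) :
    ∃ p : ℕ → Bool, ∀ n, ε ≤ ‖rayOp A B p n ξ‖ := by
  let K : ℕ → Set (ℕ → Bool) := fun n => {p | ε ≤ ‖rayOp A B p n ξ‖}
  have hK_closed n : IsClosed (K n) :=
    isClosed_of_forall_eq_lt n fun p q h hp => by rwa [Set.mem_ofPred, ← rayOp_congr h]
  have hK_anti n : K (n + 1) ⊆ K n := fun p hp =>
    hp.trans (antitone_norm_rayOp_apply hA hB p ξ n.le_succ)
  have hK_nonempty n : (K n).Nonempty := by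
    obtain ⟨w, hw, hlen⟩ := (hinf.sdiff (List.finite_length_lt Bool n)).nonempty
    -- reading `w` from its last letter gives a ray whose length-`w.length` prefix is `w`
    refine ⟨fun i => w.reverse.getD i false, ?_⟩
    have hw' : ε ≤ ‖rayOp A B (fun i => w.reverse.getD i false) w.length ξ‖ := by
      rwa [rayOp, map_reverse_range_getD_reverse]
    exact hw'.trans (antitone_norm_rayOp_apply hA hB _ ξ (not_lt.mp hlen))
  obtain ⟨p, hp⟩ := IsCompact.nonempty_iInter_of_sequence_nonempty_isCompact_isClosed K hK_anti
    hK_nonempty (hK_closed 0).isCompact hK_closed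
  exact ⟨p, Set.mem_iInter.mp hp⟩

end Words

theorem pythagorean_pair_frechet_iff_all_rays
    {H : Type*} [NormedAddCommGroup H] [InnerProductSpace ℂ H] [CompleteSpace H]
    (A B : H →L[ℂ] H)
    (hpyth : (ContinuousLinearMap.adjoint A).comp A
      + (ContinuousLinearMap.adjoint B).comp B = 1)
    (ξ : H) :
    (∀ ε : ℝ, 0 < ε → {w : List Bool | ε ≤ ‖pythWord A B w ξ‖}.Finite) ↔
      ∀ p : ℕ → Bool, Tendsto (fun n => ‖rayOp A B p n ξ‖) atTop (nhds 0) := by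
  obtain ⟨hA, hB⟩ := opNorm_le_one_of_adjoint_comp_add hpyth
  constructor
  · intro hfin p
    rw [← Nat.cofinite_eq_atTop]
    exact (tendsto_norm_cofinite_nhds_zero_iff.mpr hfin).comp
      (injective_map_reverse_range p).tendsto_cofinite
  · intro hray ε hε
    by_contra hinf
    obtain ⟨p, hp⟩ := exists_ray_forall_le_norm_rayOp_apply hA hB hinf
    obtain ⟨n, hn⟩ := ((hray p).eventually (gt_mem_nhds hε)).exists
    exact (hp n).not_gt hn
end

section
/- Let (A,B) be a Pythagorean pair on a finite-dimensional complex Hilbert space 𝔥. Then either ‖φ(w)‖ tends to 0 along the Fréchet filter of the free monoid, or there exists a nonzero vector ξ ∈ 𝔥 and a ray p such that ‖p_n ξ‖ = ‖ξ‖ for all n (equivalently lim_n ‖p_n ξ‖ = ‖ξ‖). -/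
open Filter Topology

/-!
Both letters are contractions, so `‖p_n ξ‖` decreases in `n`; let `N(p, ξ)` be its limit. If
`‖φ(w)‖ ≥ ε` for infinitely many words `w`, reading long such words backwards and passing to a limit
in the compact space of pairs (ray, vector of the unit ball) gives a pair with `N(p, ξ) ≥ ε / 2`.
As an infimum of continuous functions, `N` is upper semicontinuous, so it attains a maximum `M > 0`
on that compact space, say at `(p, ξ)`. Restarting the ray at step `k` from the unit vector
`p_k ξ / ‖p_k ξ‖` gives a pair with `N ≥ M / ‖p_k ξ‖`, so `‖p_k ξ‖ ≥ 1 ≥ ‖ξ‖` for every `k`.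
-/

namespace PythagoreanPair

variable {H : Type*} [NormedAddCommGroup H] [InnerProductSpace ℂ H] {A B : H →L[ℂ] H}

theorem norm_sq_add_norm_sq [CompleteSpace H]
    (hpyth : (ContinuousLinearMap.adjoint A).comp A
      + (ContinuousLinearMap.adjoint B).comp B = 1) (ξ : H) :
    ‖A ξ‖ ^ 2 + ‖B ξ‖ ^ 2 = ‖ξ‖ ^ 2 := by
  have h := congrArg (fun T : H →L[ℂ] H => inner ℂ (T ξ) ξ) hpyth
  simp only [add_apply, ContinuousLinearMap.comp_apply, one_apply_eq_self, inner_add_left,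
    ContinuousLinearMap.adjoint_inner_left, inner_self_eq_norm_sq_to_K] at h
  exact_mod_cast h

theorem opNorm_left_le_one [CompleteSpace H]
    (hpyth : (ContinuousLinearMap.adjoint A).comp A
      + (ContinuousLinearMap.adjoint B).comp B = 1) : ‖A‖ ≤ 1 :=
  A.opNorm_le_bound zero_le_one fun ξ => by
    have := norm_sq_add_norm_sq hpyth ξ
    rw [one_mul]
    exact (sq_le_sq₀ (norm_nonneg _) (norm_nonneg _)).mp (by linarith [sq_nonneg ‖B ξ‖])

theorem opNorm_right_le_one [CompleteSpace H]
    (hpyth : (ContinuousLinearMap.adjoint A).comp A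
      + (ContinuousLinearMap.adjoint B).comp B = 1) : ‖B‖ ≤ 1 := by
  refine opNorm_left_le_one (A := B) (B := A) ?_
  rwa [add_comm]

theorem rayOp_zero (p : ℕ → Bool) : rayOp A B p 0 = 1 := rfl

theorem rayOp_succ (p : ℕ → Bool) (n : ℕ) :
    rayOp A B p (n + 1) = (if p n then B else A) * rayOp A B p n := by
  simp [rayOp, pythWord, List.range_succ]

theorem rayOp_add (p : ℕ → Bool) (n k : ℕ) :
    rayOp A B p (n + k) = rayOp A B (fun i => p (i + k)) n * rayOp A B p k := by
  induction n with
  | zero => simp [rayOp_zero]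
  | succ n ih => rw [Nat.add_right_comm, rayOp_succ, ih, rayOp_succ, mul_assoc]

theorem rayOp_length_eq_pythWord (w : List Bool) :
    rayOp A B (fun i => w.reverse.getD i false) w.length = pythWord A B w := by
  have h : (List.range w.reverse.length).map (fun i => w.reverse.getD i false) = w.reverse := by
    apply List.ext_getElem <;> simp +contextual
  rw [rayOp, List.map_reverse, ← w.length_reverse, h, List.reverse_reverse]

theorem continuous_rayOp (n : ℕ) : Continuous fun p : ℕ → Bool => rayOp A B p n := by
  induction n with
  | zero => exact continuous_const
  | succ n ih =>
    simp only [rayOp_succ]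
    exact ((continuous_of_discreteTopology (f := fun b : Bool => if b then B else A)).comp
      (continuous_apply n)).mul ih

theorem norm_rayOp_apply_antitone (hA : ‖A‖ ≤ 1) (hB : ‖B‖ ≤ 1) (p : ℕ → Bool) (ξ : H) :
    Antitone fun n => ‖rayOp A B p n ξ‖ := by
  refine antitone_nat_of_succ_le fun n => ?_
  rw [rayOp_succ, mul_apply_eq_comp]
  refine (ContinuousLinearMap.le_opNorm _ _).trans (mul_le_of_le_one_left (norm_nonneg _) ?_)
  split <;> assumption

variable (A B) in
noncomputable def rayNormInf (p : ℕ → Bool) (ξ : H) : ℝ := ⨅ n, ‖rayOp A B p n ξ‖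

theorem bddBelow_norm_rayOp_apply (p : ℕ → Bool) (ξ : H) :
    BddBelow (Set.range fun n => ‖rayOp A B p n ξ‖) :=
  ⟨0, by rintro _ ⟨n, rfl⟩; exact norm_nonneg _⟩

theorem rayNormInf_le (p : ℕ → Bool) (ξ : H) (n : ℕ) : rayNormInf A B p ξ ≤ ‖rayOp A B p n ξ‖ :=
  ciInf_le (bddBelow_norm_rayOp_apply p ξ) n

theorem rayNormInf_smul (p : ℕ → Bool) (c : ℂ) (ξ : H) :
    rayNormInf A B p (c • ξ) = ‖c‖ * rayNormInf A B p ξ := by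
  simp only [rayNormInf, map_smul, norm_smul, Real.mul_iInf_of_nonneg (norm_nonneg c)]

theorem rayNormInf_le_rayNormInf_shift (p : ℕ → Bool) (ξ : H) (k : ℕ) :
    rayNormInf A B p ξ ≤ rayNormInf A B (fun i => p (i + k)) (rayOp A B p k ξ) :=
  le_ciInf fun n => by simpa [rayOp_add] using rayNormInf_le p ξ (n + k)

theorem continuous_rayOp_apply (n : ℕ) :
    Continuous fun x : (ℕ → Bool) × H => rayOp A B x.1 n x.2 :=
  (continuous_rayOp n).fst'.clm_apply continuous_snd

variable (A B) in
theorem upperSemicontinuous_rayNormInf :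
    UpperSemicontinuous fun x : (ℕ → Bool) × H => rayNormInf A B x.1 x.2 :=
  upperSemicontinuous_ciInf (fun x => bddBelow_norm_rayOp_apply x.1 x.2) fun n =>
    (continuous_rayOp_apply n).norm.upperSemicontinuous

theorem exists_le_norm_rayOp_apply_of_infinite (hA : ‖A‖ ≤ 1) (hB : ‖B‖ ≤ 1) {ε : ℝ}
    (hε : 0 < ε) (hinf : {w : List Bool | ε ≤ ‖pythWord A B w‖}.Infinite) (n : ℕ) :
    ∃ p : ℕ → Bool, ∃ ξ ∈ Metric.closedBall (0 : H) 1, ε / 2 ≤ ‖rayOp A B p n ξ‖ := by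
  obtain ⟨w, hw, hlen⟩ := (hinf.sdiff (List.finite_length_lt Bool n)).nonempty
  obtain ⟨ξ, hξ, hlt⟩ :=
    (pythWord A B w).exists_lt_apply_of_lt_opNorm ((half_lt_self hε).trans_le hw)
  refine ⟨fun i => w.reverse.getD i false, ξ, mem_closedBall_zero_iff.2 hξ.le, ?_⟩
  rw [← rayOp_length_eq_pythWord] at hlt
  exact hlt.le.trans (norm_rayOp_apply_antitone hA hB _ ξ (not_lt.1 hlen))

variable [FiniteDimensional ℂ H]

theorem isCompact_univ_prod_closedBall :
    IsCompact (Set.univ ×ˢ Metric.closedBall (0 : H) 1 : Set ((ℕ → Bool) × H)) :=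
  isCompact_univ.prod (isCompact_closedBall 0 1)

theorem exists_forall_le_norm_rayOp_apply (hA : ‖A‖ ≤ 1) (hB : ‖B‖ ≤ 1) {ε : ℝ}
    (h : ∀ n, ∃ p : ℕ → Bool, ∃ ξ ∈ Metric.closedBall (0 : H) 1, ε ≤ ‖rayOp A B p n ξ‖) :
    ∃ p : ℕ → Bool, ∃ ξ ∈ Metric.closedBall (0 : H) 1, ∀ n, ε ≤ ‖rayOp A B p n ξ‖ := by
  set S : ℕ → Set ((ℕ → Bool) × H) := fun n =>
    Set.univ ×ˢ Metric.closedBall 0 1 ∩ {x | ε ≤ ‖rayOp A B x.1 n x.2‖}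
  have hS_anti (n : ℕ) : S (n + 1) ⊆ S n := fun x hx =>
    ⟨hx.1, hx.2.trans (norm_rayOp_apply_antitone hA hB x.1 x.2 n.le_succ)⟩
  have hS_closed (n : ℕ) : IsClosed (S n) :=
    (isClosed_univ.prod Metric.isClosed_closedBall).inter
      (isClosed_le continuous_const (continuous_rayOp_apply n).norm)
  have hS_ne (n : ℕ) : (S n).Nonempty := by
    obtain ⟨p, ξ, hξ, hle⟩ := h n
    exact ⟨(p, ξ), ⟨trivial, hξ⟩, hle⟩
  obtain ⟨⟨p, ξ⟩, hx⟩ := IsCompact.nonempty_iInter_of_sequence_nonempty_isCompact_isClosed S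
    hS_anti hS_ne (isCompact_univ_prod_closedBall.of_isClosed_subset (hS_closed 0)
      Set.inter_subset_left) hS_closed
  have hx (n : ℕ) : (p, ξ) ∈ S n := Set.mem_iInter.1 hx n
  exact ⟨p, ξ, (hx 0).1.2, fun n => (hx n).2⟩

theorem exists_isometric_ray (hA : ‖A‖ ≤ 1) (hB : ‖B‖ ≤ 1) {p₀ : ℕ → Bool} {ξ₀ : H}
    (hξ₀ : ξ₀ ∈ Metric.closedBall (0 : H) 1) (hpos : 0 < rayNormInf A B p₀ ξ₀) :
    ∃ ξ : H, ξ ≠ 0 ∧ ∃ p : ℕ → Bool, ∀ n, ‖rayOp A B p n ξ‖ = ‖ξ‖ := by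
  obtain ⟨⟨p, ξ⟩, ⟨-, hξ⟩, hmax⟩ :=
    UpperSemicontinuousOn.exists_isMaxOn (s := Set.univ ×ˢ Metric.closedBall (0 : H) 1)
      ⟨(p₀, ξ₀), trivial, hξ₀⟩ isCompact_univ_prod_closedBall
      ((upperSemicontinuous_rayNormInf A B).upperSemicontinuousOn _)
  replace hmax (q : ℕ → Bool) {η : H} (hη : ‖η‖ ≤ 1) :
      rayNormInf A B q η ≤ rayNormInf A B p ξ :=
    isMaxOn_iff.1 hmax (q, η) ⟨trivial, mem_closedBall_zero_iff.2 hη⟩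
  set M := rayNormInf A B p ξ
  have hM : 0 < M := hpos.trans_le (hmax p₀ (mem_closedBall_zero_iff.1 hξ₀))
  have hbound (q : ℕ → Bool) {η : H} (hη : η ≠ 0) : rayNormInf A B q η ≤ M * ‖η‖ := by
    have := hmax q (norm_smul_inv_norm (𝕜 := ℂ) hη).le
    rwa [rayNormInf_smul, norm_inv, RCLike.norm_ofReal, abs_norm,
      inv_mul_le_iff₀ (norm_pos_iff.2 hη), mul_comm] at this
  have h_one (n : ℕ) : 1 ≤ ‖rayOp A B p n ξ‖ := by
    have hη := hM.trans_le (rayNormInf_le p ξ n)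
    have := (rayNormInf_le_rayNormInf_shift p ξ n).trans (hbound _ (norm_pos_iff.1 hη))
    exact (le_mul_iff_one_le_right hM).1 this
  have hξ1 : ‖ξ‖ ≤ 1 := mem_closedBall_zero_iff.1 hξ
  refine ⟨ξ, norm_pos_iff.1 (one_pos.trans_le (h_one 0)), p, fun n =>
    le_antisymm (norm_rayOp_apply_antitone hA hB p ξ n.zero_le) (hξ1.trans (h_one n))⟩

end PythagoreanPair

open PythagoreanPair in
theorem pythagorean_pair_dichotomy_finite_dim
    {H : Type*} [NormedAddCommGroup H] [InnerProductSpace ℂ H]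
    [FiniteDimensional ℂ H]
    (A B : H →L[ℂ] H)
    (hpyth : (ContinuousLinearMap.adjoint A).comp A
      + (ContinuousLinearMap.adjoint B).comp B = 1) :
    (∀ ε : ℝ, 0 < ε → {w : List Bool | ε ≤ ‖pythWord A B w‖}.Finite) ∨
      ∃ ξ : H, ξ ≠ 0 ∧ ∃ p : ℕ → Bool, ∀ n, ‖rayOp A B p n ξ‖ = ‖ξ‖ := by
  have hA := opNorm_left_le_one hpyth
  have hB := opNorm_right_le_one hpyth
  refine or_iff_not_imp_left.2 fun h => ?_
  push Not at h
  obtain ⟨ε, hε, hinf⟩ := h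
  obtain ⟨p, ξ, hξ, hpξ⟩ := exists_forall_le_norm_rayOp_apply hA hB
    (exists_le_norm_rayOp_apply_of_infinite hA hB hε hinf)
  exact exists_isometric_ray hA hB hξ ((half_pos hε).trans_le (le_ciInf hpξ))
end

section
/- Let (A,B) be a Pythagorean pair on 𝔥 and let p, q be distinct rays. If ξ is contained in p and η is contained in q (i.e. ‖p_nξ‖=‖ξ‖ and ‖q_nη‖=‖η‖ for all n), then ξ and η are orthogonal: ⟨ξ, η⟩ = 0. -/
open Filter Topology

/-!
For a Pythagorean pair, `ζ ↦ (Aζ, Bζ)` is an isometry, so a vector on which one letter acts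
isometrically is killed by the other. While the rays agree, `p_n ξ` is therefore killed by the
letter not read next, and applying the common letter preserves `⟪p_n ξ, q_n η⟫`. At the first
index where the rays differ, `p_n ξ` and `q_n η` are killed by different letters, and the
isometry identity gives `⟪p_n ξ, q_n η⟫ = 0`.
-/

section

variable {H : Type*} [NormedAddCommGroup H] [InnerProductSpace ℂ H] {A B : H →L[ℂ] H}

open scoped InnerProductSpace

noncomputable def letterOp (A B : H →L[ℂ] H) (c : Bool) : H →L[ℂ] H :=
  if c then B else A

def IsContainedIn (A B : H →L[ℂ] H) (p : ℕ → Bool) (ξ : H) : Prop :=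
  ∀ n, ‖rayOp A B p n ξ‖ = ‖ξ‖

lemma rayOp_succ_apply (p : ℕ → Bool) (n : ℕ) (x : H) :
    rayOp A B p (n + 1) x = letterOp A B (p n) (rayOp A B p n x) := by
  simp only [rayOp, pythWord, List.range_succ, List.reverse_append, List.reverse_singleton,
    List.singleton_append, List.map_cons, List.prod_cons]
  rfl

variable [CompleteSpace H]

def IsPythagoreanPair (A B : H →L[ℂ] H) : Prop :=
  (ContinuousLinearMap.adjoint A).comp A + (ContinuousLinearMap.adjoint B).comp B = 1

namespace IsPythagoreanPair

lemma symm (h : IsPythagoreanPair A B) : IsPythagoreanPair B A := by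
  rwa [IsPythagoreanPair, add_comm]

lemma inner_apply_add_inner_apply (h : IsPythagoreanPair A B) (x y : H) :
    ⟪A x, A y⟫_ℂ + ⟪B x, B y⟫_ℂ = ⟪x, y⟫_ℂ := by
  have hxy := congrArg (fun T : H →L[ℂ] H => ⟪x, T y⟫_ℂ) h
  simpa only [add_apply, ContinuousLinearMap.comp_apply, inner_add_right,
    ContinuousLinearMap.adjoint_inner_right, one_apply_eq_self] using hxy

lemma inner_letterOp_add_inner_letterOp_not (h : IsPythagoreanPair A B) (c : Bool) (x y : H) :
    ⟪letterOp A B c x, letterOp A B c y⟫_ℂ + ⟪letterOp A B (!c) x, letterOp A B (!c) y⟫_ℂ =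
      ⟪x, y⟫_ℂ := by
  cases c
  · exact h.inner_apply_add_inner_apply x y
  · exact h.symm.inner_apply_add_inner_apply x y

lemma letterOp_not_apply_eq_zero (h : IsPythagoreanPair A B) {c : Bool} {x : H}
    (hx : ‖letterOp A B c x‖ = ‖x‖) : letterOp A B (!c) x = 0 := by
  have hsq : ‖x‖ ^ 2 + ‖letterOp A B (!c) x‖ ^ 2 = ‖x‖ ^ 2 := by
    have := h.inner_letterOp_add_inner_letterOp_not c x x
    simp only [inner_self_eq_norm_sq_to_K, hx] at this
    exact_mod_cast this
  simpa using hsq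

lemma inner_letterOp_of_letterOp_not_apply_eq_zero (h : IsPythagoreanPair A B) {c : Bool}
    {x : H} (hx : letterOp A B (!c) x = 0) (y : H) :
    ⟪letterOp A B c x, letterOp A B c y⟫_ℂ = ⟪x, y⟫_ℂ := by
  simpa [hx] using h.inner_letterOp_add_inner_letterOp_not c x y

lemma inner_eq_zero_of_letterOp_apply_eq_zero (h : IsPythagoreanPair A B) {c : Bool} {x y : H}
    (hx : letterOp A B (!c) x = 0) (hy : letterOp A B c y = 0) : ⟪x, y⟫_ℂ = 0 := by
  simpa [hx, hy] using (h.inner_letterOp_add_inner_letterOp_not c x y).symm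

end IsPythagoreanPair

lemma IsContainedIn.letterOp_not_apply_rayOp_eq_zero (hAB : IsPythagoreanPair A B)
    {p : ℕ → Bool} {ξ : H} (hξ : IsContainedIn A B p ξ) (n : ℕ) :
    letterOp A B (!p n) (rayOp A B p n ξ) = 0 :=
  hAB.letterOp_not_apply_eq_zero <| by rw [← rayOp_succ_apply, hξ, hξ]

lemma inner_rayOp_apply_of_forall_lt_eq (hAB : IsPythagoreanPair A B) {p q : ℕ → Bool}
    {ξ η : H} (hξ : IsContainedIn A B p ξ) {n : ℕ} (hpq : ∀ k < n, p k = q k) :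
    ⟪rayOp A B p n ξ, rayOp A B q n η⟫_ℂ = ⟪ξ, η⟫_ℂ := by
  induction n with
  | zero => rfl
  | succ n ih =>
    have hkill := hξ.letterOp_not_apply_rayOp_eq_zero hAB n
    rw [rayOp_succ_apply, rayOp_succ_apply, ← hpq n n.lt_succ_self,
      hAB.inner_letterOp_of_letterOp_not_apply_eq_zero hkill]
    exact ih fun k hk => hpq k (hk.trans n.lt_succ_self)

end

theorem pythagorean_pair_contained_distinct_rays_orthogonal
    {H : Type*} [NormedAddCommGroup H] [InnerProductSpace ℂ H] [CompleteSpace H]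
    (A B : H →L[ℂ] H)
    (hpyth : (ContinuousLinearMap.adjoint A).comp A
      + (ContinuousLinearMap.adjoint B).comp B = 1)
    (p q : ℕ → Bool) (hpq : p ≠ q) (ξ η : H)
    (hξ : ∀ n, ‖rayOp A B p n ξ‖ = ‖ξ‖)
    (hη : ∀ n, ‖rayOp A B q n η‖ = ‖η‖) :
    (inner ℂ ξ η : ℂ) = 0 := by
  have hAB : IsPythagoreanPair A B := hpyth
  have hξ : IsContainedIn A B p ξ := hξ
  have hη : IsContainedIn A B q η := hη
  have hdiff : ∃ n, p n ≠ q n := Function.ne_iff.mp hpq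
  obtain ⟨n, hne, hagree⟩ : ∃ n, p n ≠ q n ∧ ∀ k < n, p k = q k :=
    ⟨Nat.find hdiff, Nat.find_spec hdiff, fun k hk => not_not.mp (Nat.find_min hdiff hk)⟩
  rw [← inner_rayOp_apply_of_forall_lt_eq hAB hξ hagree]
  refine hAB.inner_eq_zero_of_letterOp_apply_eq_zero (hξ.letterOp_not_apply_rayOp_eq_zero hAB n) ?_
  simpa [Bool.eq_not_iff.mpr hne.symm] using hη.letterOp_not_apply_rayOp_eq_zero hAB n
end

section
/- Let (A,B) be a Pythagorean pair on 𝔥 with both ker(A) and ker(B) finite-dimensional, and let p be a periodic ray with period c of length d. Then 𝔛^p = {ξ : ‖p_nξ‖=‖ξ‖ for all n} is a finite-dimensional subspace and the restriction of φ(c) to 𝔛^p is a unitary operator on 𝔛^p. -/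
open Filter Topology

/-! Since `‖A ξ‖² + ‖B ξ‖² = ‖ξ‖²`, a letter preserves the norm of a vector exactly when the
other letter kills it. Hence `𝔛^p` is the intersection of the kernels of the operators
"other letter after `p_n`", a subspace contained in the kernel of the letter other
than `p 0`, so finite-dimensional. Periodicity gives `p_{n+d} = p_n p_d`, so `p_d` maps `𝔛^p`
isometrically into itself, and an injective endomorphism of a finite-dimensional space is
onto. -/

theorem norm_sq_add_norm_sq_of_adjoint_comp_add_s12 {𝕜 E F G : Type*} [RCLike 𝕜]
    [NormedAddCommGroup E] [InnerProductSpace 𝕜 E] [CompleteSpace E]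
    [NormedAddCommGroup F] [InnerProductSpace 𝕜 F] [CompleteSpace F]
    [NormedAddCommGroup G] [InnerProductSpace 𝕜 G] [CompleteSpace G]
    {A : E →L[𝕜] F} {B : E →L[𝕜] G}
    (hpyth : (ContinuousLinearMap.adjoint A).comp A + (ContinuousLinearMap.adjoint B).comp B = 1)
    (x : E) : ‖A x‖ ^ 2 + ‖B x‖ ^ 2 = ‖x‖ ^ 2 := by
  rw [A.apply_norm_sq_eq_inner_adjoint_left, B.apply_norm_sq_eq_inner_adjoint_left,
    ← map_add, ← inner_add_left, ← add_apply, hpyth,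
    one_apply_eq_self, inner_self_eq_norm_sq]

theorem norm_apply_eq_iff_apply_eq_zero_of_adjoint_comp_add {𝕜 E F G : Type*} [RCLike 𝕜]
    [NormedAddCommGroup E] [InnerProductSpace 𝕜 E] [CompleteSpace E]
    [NormedAddCommGroup F] [InnerProductSpace 𝕜 F] [CompleteSpace F]
    [NormedAddCommGroup G] [InnerProductSpace 𝕜 G] [CompleteSpace G]
    {A : E →L[𝕜] F} {B : E →L[𝕜] G}
    (hpyth : (ContinuousLinearMap.adjoint A).comp A + (ContinuousLinearMap.adjoint B).comp B = 1)
    (x : E) : ‖A x‖ = ‖x‖ ↔ B x = 0 := by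
  have h := norm_sq_add_norm_sq_of_adjoint_comp_add_s12 hpyth x
  rw [← norm_eq_zero, ← sq_eq_sq₀ (norm_nonneg _) (norm_nonneg _), ← sq_eq_zero_iff]
  constructor <;> intro h' <;> linarith

theorem LinearMap.surjOn_of_norm_map {𝕜 E : Type*} [NormedField 𝕜] [NormedAddCommGroup E]
    [NormedSpace 𝕜 E]
    {T : E →ₗ[𝕜] E} {V : Submodule 𝕜 E} [FiniteDimensional 𝕜 V] (hmaps : ∀ x ∈ V, T x ∈ V)
    (hnorm : ∀ x ∈ V, ‖T x‖ = ‖x‖) : Set.SurjOn T V V := by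
  refine (LinearMap.injOn_iff_surjOn hmaps).1 fun x hx y hy hxy => ?_
  have h := hnorm (x - y) (V.sub_mem hx hy)
  rwa [map_sub, hxy, sub_self, norm_zero, eq_comm, norm_eq_zero, sub_eq_zero] at h

section PythagoreanPair

variable {H : Type*} [NormedAddCommGroup H] [InnerProductSpace ℂ H] (A B : H →L[ℂ] H)
  (p : ℕ → Bool)

theorem norm_letter_apply_eq_iff [CompleteSpace H]
    (hpyth : (ContinuousLinearMap.adjoint A).comp A + (ContinuousLinearMap.adjoint B).comp B = 1)
    (b : Bool) (x : H) : ‖(if b then B else A) x‖ = ‖x‖ ↔ (if b then A else B) x = 0 := by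
  cases b
  · exact norm_apply_eq_iff_apply_eq_zero_of_adjoint_comp_add hpyth x
  · exact norm_apply_eq_iff_apply_eq_zero_of_adjoint_comp_add (by rwa [add_comm] at hpyth) x

@[simp]
theorem rayOp_zero : rayOp A B p 0 = 1 := by
  simp [rayOp, pythWord]

theorem rayOp_succ_s12 (n : ℕ) : rayOp A B p (n + 1) = (if p n then B else A) * rayOp A B p n := by
  simp [rayOp, pythWord, List.range_succ]

theorem rayOp_add_of_periodic {d : ℕ} (hp : Function.Periodic p d) (n : ℕ) :
    rayOp A B p (n + d) = rayOp A B p n * rayOp A B p d := by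
  induction n with
  | zero => simp
  | succ n ih => rw [Nat.add_right_comm, rayOp_succ_s12, hp, ih, rayOp_succ_s12, mul_assoc]

/-- The space `𝔛^p`, presented as the vectors that the letter other than `p n` kills after
`p_n` (see `mem_raySpace_iff`). -/
noncomputable def raySpace : Submodule ℂ H :=
  ⨅ n, LinearMap.ker (((if p n then A else B) ∘L rayOp A B p n : H →L[ℂ] H) : H →ₗ[ℂ] H)

theorem mem_raySpace_iff [CompleteSpace H]
    (hpyth : (ContinuousLinearMap.adjoint A).comp A + (ContinuousLinearMap.adjoint B).comp B = 1)
    (ξ : H) : ξ ∈ raySpace A B p ↔ ∀ n, ‖rayOp A B p n ξ‖ = ‖ξ‖ := by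
  have hstep : ∀ n, ((if p n then A else B) ∘L rayOp A B p n) ξ = 0 ↔
      ‖rayOp A B p (n + 1) ξ‖ = ‖rayOp A B p n ξ‖ := fun n => by
    rw [ContinuousLinearMap.comp_apply, rayOp_succ_s12, mul_apply_eq_comp,
      norm_letter_apply_eq_iff A B hpyth]
  simp only [raySpace, Submodule.mem_iInf, LinearMap.mem_ker, ContinuousLinearMap.coe_coe, hstep]
  constructor
  · intro h n
    induction n with
    | zero => simp
    | succ n ih => rw [h, ih]
  · intro h n
    rw [h, h]

theorem raySpace_le_ker :
    raySpace A B p ≤ LinearMap.ker ((if p 0 then A else B : H →L[ℂ] H) : H →ₗ[ℂ] H) := by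
  intro ξ hξ
  simpa using Submodule.mem_iInf _ |>.1 hξ 0

instance [FiniteDimensional ℂ (LinearMap.ker (A : H →ₗ[ℂ] H))]
    [FiniteDimensional ℂ (LinearMap.ker (B : H →ₗ[ℂ] H))] :
    FiniteDimensional ℂ (raySpace A B p) := by
  have h := raySpace_le_ker A B p
  generalize p 0 = b at h
  cases b <;> simp only [Bool.false_eq_true, if_true, if_false] at h <;>
    exact Submodule.finiteDimensional_of_le h

theorem rayOp_period_mem_raySpace [CompleteSpace H]
    (hpyth : (ContinuousLinearMap.adjoint A).comp A + (ContinuousLinearMap.adjoint B).comp B = 1)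
    {d : ℕ} (hp : Function.Periodic p d) {ξ : H} (hξ : ξ ∈ raySpace A B p) :
    rayOp A B p d ξ ∈ raySpace A B p := by
  rw [mem_raySpace_iff A B p hpyth] at hξ ⊢
  intro n
  rw [← mul_apply_eq_comp, ← rayOp_add_of_periodic A B p hp, hξ, hξ]

end PythagoreanPair

theorem pythagorean_pair_periodic_ray_space_finiteDim_unitary_general
    {H : Type*} [NormedAddCommGroup H] [InnerProductSpace ℂ H] [CompleteSpace H]
    (A B : H →L[ℂ] H)
    (hpyth : (ContinuousLinearMap.adjoint A).comp A
      + (ContinuousLinearMap.adjoint B).comp B = 1)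
    [FiniteDimensional ℂ (LinearMap.ker (A : H →ₗ[ℂ] H))] [FiniteDimensional ℂ (LinearMap.ker (B : H →ₗ[ℂ] H))]
    (c : List Bool)
    (p : ℕ → Bool) (hp : ∀ n, p n = c.getD (n % c.length) false) :
    FiniteDimensional ℂ
        (Submodule.span ℂ {ξ : H | ∀ n, ‖rayOp A B p n ξ‖ = ‖ξ‖}) ∧
      (∀ ξ : H, (∀ n, ‖rayOp A B p n ξ‖ = ‖ξ‖) →
        (∀ n, ‖rayOp A B p n (rayOp A B p c.length ξ)‖ = ‖rayOp A B p c.length ξ‖) ∧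
          ‖rayOp A B p c.length ξ‖ = ‖ξ‖) ∧
      (∀ η : H, (∀ n, ‖rayOp A B p n η‖ = ‖η‖) →
        ∃ ξ : H, (∀ n, ‖rayOp A B p n ξ‖ = ‖ξ‖) ∧ rayOp A B p c.length ξ = η) := by
  have hper : Function.Periodic p c.length := fun n => by rw [hp, hp, Nat.add_mod_right]
  have hmem := mem_raySpace_iff A B p hpyth
  have hX : {ξ : H | ∀ n, ‖rayOp A B p n ξ‖ = ‖ξ‖} = raySpace A B p :=
    Set.ext fun ξ => (hmem ξ).symm
  have hmaps : ∀ ξ ∈ raySpace A B p, rayOp A B p c.length ξ ∈ raySpace A B p :=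
    fun _ => rayOp_period_mem_raySpace A B p hpyth hper
  refine ⟨?_, fun ξ hξ => ⟨(hmem _).1 (hmaps ξ ((hmem ξ).2 hξ)), hξ _⟩, fun η hη => ?_⟩
  · rw [hX, Submodule.span_eq]
    infer_instance
  · obtain ⟨ξ, hξ, rfl⟩ := LinearMap.surjOn_of_norm_map
      (T := (rayOp A B p c.length : H →ₗ[ℂ] H)) hmaps (fun ξ hξ => (hmem ξ).1 hξ _) ((hmem η).2 hη)
    exact ⟨ξ, (hmem ξ).1 hξ, rfl⟩

theorem pythagorean_pair_periodic_ray_space_finiteDim_unitary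
    {H : Type*} [NormedAddCommGroup H] [InnerProductSpace ℂ H] [CompleteSpace H]
    (A B : H →L[ℂ] H)
    (hpyth : (ContinuousLinearMap.adjoint A).comp A
      + (ContinuousLinearMap.adjoint B).comp B = 1)
    [FiniteDimensional ℂ (LinearMap.ker (A : H →ₗ[ℂ] H))] [FiniteDimensional ℂ (LinearMap.ker (B : H →ₗ[ℂ] H))]
    (c : List Bool) (hc : c ≠ [])
    (p : ℕ → Bool) (hp : ∀ n, p n = c.getD (n % c.length) false) :
    FiniteDimensional ℂ
        (Submodule.span ℂ {ξ : H | ∀ n, ‖rayOp A B p n ξ‖ = ‖ξ‖}) ∧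
      (∀ ξ : H, (∀ n, ‖rayOp A B p n ξ‖ = ‖ξ‖) →
        (∀ n, ‖rayOp A B p n (rayOp A B p c.length ξ)‖ = ‖rayOp A B p c.length ξ‖) ∧
          ‖rayOp A B p c.length ξ‖ = ‖ξ‖) ∧
      (∀ η : H, (∀ n, ‖rayOp A B p n η‖ = ‖η‖) →
        ∃ ξ : H, (∀ n, ‖rayOp A B p n ξ‖ = ‖ξ‖) ∧ rayOp A B p c.length ξ = η) :=
  pythagorean_pair_periodic_ray_space_finiteDim_unitary_general A B hpyth c p hp
end

section
/- Let (A,B) be a Pythagorean pair on a finite-dimensional Hilbert space 𝔥, let 𝔛 ⊆ 𝔥 be a subspace invariant under A and B such that the orthogonal complement 𝔛^⊥ contains no nonzero subspace invariant under both A and B. Then for every ξ ∈ 𝔛^⊥, the quantity ψ_n(ξ) := Σ_{|w|=n} ‖P φ(w)ξ‖² tends to 0 as n → ∞, where P is the orthogonal projection onto 𝔛^⊥. -/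
/-!
Write `P` for the orthogonal projection onto `K = 𝔛ᗮ`. Invariance of `𝔛 = ker P` gives
`P φ(u) P φ(v) = P φ(uv)`, so `ψ_{N+m}(ξ) = ∑_{|v| = m} ψ_N(P φ(v) ξ)`; together with
`‖Aη‖² + ‖Bη‖² ≤ ‖η‖²` this makes `ψ_n` decreasing and bounded by `‖ξ‖²`. For a unit vector
`η ∈ K` the orbit `φ(w) η` cannot stay inside `K` (its span would be a nonzero invariant subspace
of `K`), and a word `w` leading out of `K` gives `ψ_{|w|}(η) < 1`. Compactness of the unit sphere
of `K` then gives one `N` and one `s < 1` with `ψ_N ≤ s ‖·‖²` on `K`, whence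
`ψ_{kN}(ξ) ≤ sᵏ ‖ξ‖²`.
-/

open Filter Topology

theorem Fintype.sum_ofFn_append {α M : Type*} [Fintype α] [AddCommMonoid M] (m n : ℕ)
    (f : List α → M) :
    ∑ w : Fin (m + n) → α, f (List.ofFn w)
      = ∑ u : Fin m → α, ∑ v : Fin n → α, f (List.ofFn u ++ List.ofFn v) := by
  rw [← (Fin.appendEquiv m n).sum_comp, Fintype.sum_prod_type]
  exact Fintype.sum_congr _ _ fun u => Fintype.sum_congr _ _ fun v =>
    congrArg f (List.ofFn_fin_append u v)

section Words

variable {H : Type*} [NormedAddCommGroup H] [InnerProductSpace ℂ H] (A B : H →L[ℂ] H)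

theorem pythWord_append_apply (u v : List Bool) (ξ : H) :
    pythWord A B (u ++ v) ξ = pythWord A B u (pythWord A B v ξ) := by
  simp [pythWord]

theorem pythWord_mem {V : Submodule ℂ H} (hV : ∀ ξ ∈ V, A ξ ∈ V ∧ B ξ ∈ V) (w : List Bool)
    {ξ : H} (hξ : ξ ∈ V) : pythWord A B w ξ ∈ V := by
  induction w with
  | nil => simpa [pythWord] using hξ
  | cons x w ih => cases x <;> simp_all [pythWord]

theorem exists_pythWord_apply_notMem {K : Submodule ℂ H}
    (hmin : ∀ Y : Submodule ℂ H, Y ≤ K → (∀ ξ ∈ Y, A ξ ∈ Y ∧ B ξ ∈ Y) → Y = ⊥)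
    {ξ : H} (hξ : ξ ≠ 0) : ∃ w, pythWord A B w ξ ∉ K := by
  by_contra! h
  -- the largest invariant subspace contained in `K`
  let Y : Submodule ℂ H := ⨅ w : List Bool, K.comap (pythWord A B w : H →ₗ[ℂ] H)
  have hYK : Y ≤ K := fun η hη => by simpa [pythWord] using Submodule.mem_iInf _ |>.mp hη []
  have hYinv : ∀ η ∈ Y, A η ∈ Y ∧ B η ∈ Y := by
    intro η hη
    simp only [Y, Submodule.mem_iInf, Submodule.mem_comap] at hη ⊢
    refine ⟨fun w => ?_, fun w => ?_⟩
    · simpa [pythWord_append_apply, pythWord] using hη (w ++ [false])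
    · simpa [pythWord_append_apply, pythWord] using hη (w ++ [true])
  have hξY : ξ ∈ Y := Submodule.mem_iInf _ |>.mpr h
  exact hξ (by simpa [hmin Y hYK hYinv] using hξY)

theorem norm_sq_add_norm_sq_eq_of_adjoint [CompleteSpace H]
    (hpyth : (ContinuousLinearMap.adjoint A).comp A + (ContinuousLinearMap.adjoint B).comp B = 1)
    (ξ : H) : ‖A ξ‖ ^ 2 + ‖B ξ‖ ^ 2 = ‖ξ‖ ^ 2 := by
  have h := congrArg (fun T : H →L[ℂ] H => inner ℂ (T ξ) ξ) hpyth
  simp only [add_apply, ContinuousLinearMap.comp_apply, inner_add_left,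
    ContinuousLinearMap.adjoint_inner_left, one_apply_eq_self, inner_self_eq_norm_sq_to_K] at h
  exact_mod_cast h

end Words

noncomputable section Psi

variable {H : Type*} [NormedAddCommGroup H] [InnerProductSpace ℂ H] (A B : H →L[ℂ] H)
  (K : Submodule ℂ H) [K.HasOrthogonalProjection]

/-- `ψ_n` of the paper, with `K` in the role of `𝔛ᗮ`. -/
def pythPsi (n : ℕ) (ξ : H) : ℝ :=
  ∑ w : Fin n → Bool, ‖K.starProjection (pythWord A B (List.ofFn w) ξ)‖ ^ 2

theorem pythPsi_nonneg (n : ℕ) (ξ : H) : 0 ≤ pythPsi A B K n ξ :=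
  Finset.sum_nonneg fun _ _ => by positivity

theorem pythPsi_smul (n : ℕ) (c : ℂ) (ξ : H) :
    pythPsi A B K n (c • ξ) = ‖c‖ ^ 2 * pythPsi A B K n ξ := by
  simp [pythPsi, norm_smul, mul_pow, Finset.mul_sum]

theorem continuous_pythPsi (n : ℕ) : Continuous (pythPsi A B K n) := by
  unfold pythPsi
  fun_prop

theorem pythPsi_top (n : ℕ) (ξ : H) :
    pythPsi A B ⊤ n ξ = ∑ w : Fin n → Bool, ‖pythWord A B (List.ofFn w) ξ‖ ^ 2 := by
  simp [pythPsi, Submodule.starProjection_top']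

variable {A B K}

theorem starProjection_pythWord (hinv : ∀ ξ ∈ Kᗮ, A ξ ∈ Kᗮ ∧ B ξ ∈ Kᗮ) (w : List Bool) (ξ : H) :
    K.starProjection (pythWord A B w ξ)
      = K.starProjection (pythWord A B w (K.starProjection ξ)) := by
  have hker : pythWord A B w (ξ - K.starProjection ξ) ∈ Kᗮ :=
    pythWord_mem A B hinv w (K.sub_starProjection_mem_orthogonal ξ)
  rw [← sub_eq_zero, ← map_sub, ← map_sub]
  exact K.starProjection_apply_eq_zero_iff.mpr hker

theorem pythPsi_add (hinv : ∀ ξ ∈ Kᗮ, A ξ ∈ Kᗮ ∧ B ξ ∈ Kᗮ) (N m : ℕ) (ξ : H) :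
    pythPsi A B K (N + m) ξ
      = ∑ v : Fin m → Bool, pythPsi A B K N (K.starProjection (pythWord A B (List.ofFn v) ξ)) := by
  rw [pythPsi, Fintype.sum_ofFn_append N m fun w => ‖K.starProjection (pythWord A B w ξ)‖ ^ 2,
    Finset.sum_comm]
  simp only [pythPsi, pythWord_append_apply, starProjection_pythWord hinv _ (pythWord A B _ ξ)]

theorem pythPsi_add_le_mul (hinv : ∀ ξ ∈ Kᗮ, A ξ ∈ Kᗮ ∧ B ξ ∈ Kᗮ) {N : ℕ} {s : ℝ}
    (hN : ∀ η ∈ K, pythPsi A B K N η ≤ s * ‖η‖ ^ 2) (m : ℕ) (ξ : H) :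
    pythPsi A B K (N + m) ξ ≤ s * pythPsi A B K m ξ := by
  rw [pythPsi_add hinv, pythPsi, Finset.mul_sum]
  exact Finset.sum_le_sum fun v _ => hN _ (K.starProjection_apply_mem _)

theorem pythPsi_one_le (hcontr : ∀ ξ, ‖A ξ‖ ^ 2 + ‖B ξ‖ ^ 2 ≤ ‖ξ‖ ^ 2) (ξ : H) :
    pythPsi A B K 1 ξ ≤ ‖ξ‖ ^ 2 := calc
  pythPsi A B K 1 ξ = ‖K.starProjection (A ξ)‖ ^ 2 + ‖K.starProjection (B ξ)‖ ^ 2 := by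
    rw [pythPsi, ← (Equiv.funUnique (Fin 1) Bool).symm.sum_comp]
    simp [pythWord, add_comm]
  _ ≤ ‖A ξ‖ ^ 2 + ‖B ξ‖ ^ 2 := by gcongr <;> exact K.norm_starProjection_apply_le _
  _ ≤ ‖ξ‖ ^ 2 := hcontr ξ

variable (hcontr : ∀ ξ, ‖A ξ‖ ^ 2 + ‖B ξ‖ ^ 2 ≤ ‖ξ‖ ^ 2) (hinv : ∀ ξ ∈ Kᗮ, A ξ ∈ Kᗮ ∧ B ξ ∈ Kᗮ)
include hcontr hinv

theorem antitone_pythPsi (ξ : H) : Antitone fun n => pythPsi A B K n ξ := by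
  refine antitone_nat_of_succ_le fun m => ?_
  rw [add_comm]
  simpa using pythPsi_add_le_mul (N := 1) (s := 1) hinv
    (fun η _ => by simpa using pythPsi_one_le hcontr η) m ξ

theorem pythPsi_le_norm_sq (n : ℕ) (ξ : H) : pythPsi A B K n ξ ≤ ‖ξ‖ ^ 2 := calc
  pythPsi A B K n ξ ≤ pythPsi A B K 0 ξ := antitone_pythPsi hcontr hinv ξ (Nat.zero_le n)
  _ ≤ ‖ξ‖ ^ 2 := by
    simpa [pythPsi, pythWord] using
      pow_le_pow_left₀ (norm_nonneg _) (K.norm_starProjection_apply_le ξ) 2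

omit hinv in
theorem pythPsi_length_lt_norm_sq_of_notMem {w : List Bool} {ξ : H}
    (hw : pythWord A B w ξ ∉ K) : pythPsi A B K w.length ξ < ‖ξ‖ ^ 2 := calc
  pythPsi A B K w.length ξ < pythPsi A B ⊤ w.length ξ := by
    rw [pythPsi_top, pythPsi]
    refine Finset.sum_lt_sum (fun v _ => ?_) ⟨w.get, Finset.mem_univ _, ?_⟩
    · gcongr
      exact K.norm_starProjection_apply_le _
    · rw [List.ofFn_get]
      gcongr
      exact lt_of_le_of_ne (K.norm_starProjection_apply_le _)
        (mt (K.mem_iff_norm_starProjection _).mpr hw)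
  _ ≤ ‖ξ‖ ^ 2 := pythPsi_le_norm_sq hcontr (by simp) w.length ξ

theorem pythPsi_mul_le {N : ℕ} {s : ℝ} (hs : 0 ≤ s)
    (hN : ∀ η ∈ K, pythPsi A B K N η ≤ s * ‖η‖ ^ 2) (k : ℕ) (ξ : H) :
    pythPsi A B K (k * N) ξ ≤ s ^ k * ‖ξ‖ ^ 2 := by
  induction k with
  | zero => simpa using pythPsi_le_norm_sq hcontr hinv 0 ξ
  | succ k ih => calc
    pythPsi A B K ((k + 1) * N) ξ = pythPsi A B K (N + k * N) ξ := by rw [Nat.succ_mul, add_comm]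
    _ ≤ s * pythPsi A B K (k * N) ξ := pythPsi_add_le_mul hinv hN _ ξ
    _ ≤ s * (s ^ k * ‖ξ‖ ^ 2) := by gcongr
    _ = s ^ (k + 1) * ‖ξ‖ ^ 2 := by ring

theorem tendsto_pythPsi_zero_of_le_mul {N : ℕ} (hN0 : 0 < N) {s : ℝ} (hs : s ∈ Set.Ioo 0 1)
    (hN : ∀ η ∈ K, pythPsi A B K N η ≤ s * ‖η‖ ^ 2) (ξ : H) :
    Tendsto (fun n => pythPsi A B K n ξ) atTop (𝓝 0) := by
  have hbound (n : ℕ) : pythPsi A B K n ξ ≤ s ^ (n / N) * ‖ξ‖ ^ 2 :=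
    (antitone_pythPsi hcontr hinv ξ (Nat.div_mul_le_self n N)).trans
      (pythPsi_mul_le hcontr hinv hs.1.le hN _ ξ)
  have hpow : Tendsto (fun n => s ^ (n / N) * ‖ξ‖ ^ 2) atTop (𝓝 0) := by
    simpa using ((tendsto_pow_atTop_nhds_zero_of_lt_one hs.1.le hs.2).comp
      (Nat.tendsto_div_const_atTop hN0.ne')).mul_const (‖ξ‖ ^ 2)
  exact squeeze_zero (pythPsi_nonneg A B K · ξ) hbound hpow

omit hcontr hinv in
theorem pythPsi_le_mul_norm_sq_of_sphere {n : ℕ} {s : ℝ}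
    (h : ∀ η ∈ K, ‖η‖ = 1 → pythPsi A B K n η ≤ s) {η : H} (hη : η ∈ K) :
    pythPsi A B K n η ≤ s * ‖η‖ ^ 2 := by
  rcases eq_or_ne η 0 with rfl | hη0
  · simpa using (pythPsi_smul A B K n 0 0).le
  have hnorm : ‖η‖ ≠ 0 := norm_ne_zero_iff.mpr hη0
  have hunit : ‖(‖η‖⁻¹ : ℂ) • η‖ = 1 := by simp [norm_smul, hnorm]
  calc pythPsi A B K n η = ‖η‖ ^ 2 * pythPsi A B K n ((‖η‖⁻¹ : ℂ) • η) := by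
        rw [pythPsi_smul, norm_inv, Complex.norm_real, norm_norm, inv_pow,
          mul_inv_cancel_left₀ (pow_ne_zero 2 hnorm)]
    _ ≤ ‖η‖ ^ 2 * s := by gcongr; exact h _ (K.smul_mem _ hη) hunit
    _ = s * ‖η‖ ^ 2 := mul_comm _ _

theorem exists_pythPsi_lt_on_sphere [FiniteDimensional ℂ H]
    (hcover : ∀ η ∈ K, ‖η‖ = 1 → ∃ n, pythPsi A B K n η < 1) :
    ∃ N, ∃ s ∈ Set.Ioo (0 : ℝ) 1, ∀ η ∈ K, ‖η‖ = 1 → pythPsi A B K (N + 1) η < s := by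
  -- Indexing the open cover by pairs `(N, s)` yields the uniform `N` and the uniform `s < 1`
  -- from a single compactness argument.
  let U : ℕ × Set.Ioo (0 : ℝ) 1 → Set H := fun p => {η | pythPsi A B K (p.1 + 1) η < p.2}
  have hU : Monotone U := fun p q hpq η (hη : _ < _) => show _ < _ from
    (antitone_pythPsi hcontr hinv η (by simpa using hpq.1)).trans_lt (hη.trans_le hpq.2)
  have hSU : (K : Set H) ∩ Metric.sphere 0 1 ⊆ ⋃ p, U p := by
    rintro η ⟨hηK, hη⟩
    obtain ⟨n, hn⟩ := hcover η hηK (by simpa using hη)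
    obtain ⟨s, hns, hs1⟩ := exists_between hn
    refine Set.mem_iUnion.mpr ⟨(n, ⟨s, (pythPsi_nonneg A B K n η).trans_lt hns, hs1⟩), ?_⟩
    exact (antitone_pythPsi hcontr hinv η n.le_succ).trans_lt hns
  have : Nonempty (Set.Ioo (0 : ℝ) 1) := (Set.nonempty_Ioo.mpr one_pos).to_subtype
  obtain ⟨⟨N, s⟩, hN⟩ :=
    ((isCompact_sphere 0 1).inter_left K.closed_of_finiteDimensional).elim_directed_cover U
      (fun p => isOpen_lt (continuous_pythPsi A B K _) continuous_const) hSU hU.directed_le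
  exact ⟨N, s, s.2, fun η hηK hη => hN ⟨hηK, by simpa using hη⟩⟩

theorem exists_pythPsi_le_mul_norm_sq [FiniteDimensional ℂ H]
    (hmin : ∀ Y : Submodule ℂ H, Y ≤ K → (∀ ξ ∈ Y, A ξ ∈ Y ∧ B ξ ∈ Y) → Y = ⊥) :
    ∃ N, ∃ s ∈ Set.Ioo (0 : ℝ) 1, ∀ η ∈ K, pythPsi A B K (N + 1) η ≤ s * ‖η‖ ^ 2 := by
  have hcover (η : H) (_ : η ∈ K) (hη : ‖η‖ = 1) : ∃ n, pythPsi A B K n η < 1 := by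
    obtain ⟨w, hw⟩ :=
      exists_pythWord_apply_notMem A B hmin (ne_zero_of_norm_ne_zero (hη.trans_ne one_ne_zero))
    exact ⟨w.length, by simpa [hη] using pythPsi_length_lt_norm_sq_of_notMem hcontr hw⟩
  obtain ⟨N, s, hs, hN⟩ := exists_pythPsi_lt_on_sphere hcontr hinv hcover
  exact ⟨N, s, hs, fun η hη =>
    pythPsi_le_mul_norm_sq_of_sphere (fun u hu hu1 => (hN u hu hu1).le) hη⟩

end Psi

theorem pythagorean_pair_psi_tendsto_zero
    {H : Type*} [NormedAddCommGroup H] [InnerProductSpace ℂ H]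
    [FiniteDimensional ℂ H]
    (A B : H →L[ℂ] H)
    (hpyth : (ContinuousLinearMap.adjoint A).comp A
      + (ContinuousLinearMap.adjoint B).comp B = 1)
    (X : Submodule ℂ H)
    (hXinv : ∀ ξ ∈ X, A ξ ∈ X ∧ B ξ ∈ X)
    (hmin : ∀ Y : Submodule ℂ H, Y ≤ Xᗮ → (∀ ξ ∈ Y, A ξ ∈ Y ∧ B ξ ∈ Y) → Y = ⊥) :
    ∀ ξ ∈ Xᗮ,
      Tendsto (fun n => ∑ w : Fin n → Bool,
          ‖(Submodule.orthogonalProjectionOnto Xᗮ (pythWord A B (List.ofFn w) ξ) : H)‖ ^ 2)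
        atTop (nhds 0) := by
  intro ξ _
  have hcontr (η : H) : ‖A η‖ ^ 2 + ‖B η‖ ^ 2 ≤ ‖η‖ ^ 2 :=
    (norm_sq_add_norm_sq_eq_of_adjoint A B hpyth η).le
  have hinv : ∀ η ∈ Xᗮᗮ, A η ∈ Xᗮᗮ ∧ B η ∈ Xᗮᗮ := by rwa [Submodule.orthogonal_orthogonal]
  obtain ⟨N, s, hs, hN⟩ := exists_pythPsi_le_mul_norm_sq hcontr hinv hmin
  exact tendsto_pythPsi_zero_of_le_mul hcontr hinv N.succ_pos hs hN ξ
end
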